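/- arXiv:2003.04108 — 2 statements merged into one kernel-verified Lean document; each statement's English description precedes it below -/
import Mathlib

section
/- Let π be a policy with π(a|s) > 0 for all s ∈ S and a ∈ A, let π' be any policy, let ε ∈ (0,1), and set κ(s,a) = π'(a|s)/π(a|s). Define the clipped surrogate L^clip_π(π') = J(π) + ∑_{s∈S} ∑_{a∈A} μ^π_ρ(s,a) · min{ A^π(s,a)·κ(s,a), A^π(s,a)·clip(κ(s,a), 1−ε, 1+ε) }, where clip(x, l, u) = max(l, min(x, u)). Then J(π') ≥ L^clip_π(π') − ε^π · D_TV(d^{π'}_ρ ‖ d^π_ρ), where ε^π = max_{s∈S} |∑_{a∈A} π'(a|s) A^π(s,a)|. -/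
/-!
By the performance difference lemma, `J(π') - J(π) = ∑ₛ d^{π'}(s) ḡ(s)` with
`ḡ(s) = ∑ₐ π'(a|s) A^π(s,a)`; it comes from telescoping the Bellman flow equation
`∑ₛ d^{π'}(s) (f(s) - γ (P_{π'} f)(s)) = (1 - γ) ∑ₛ ρ(s) f(s)` at `f = V^{π'} - V^π`.
Trading `d^{π'}` for `d^π` costs at most `max |ḡ| · D_TV(d^{π'} ‖ d^π)`, and
`∑ₛ d^π(s) ḡ(s) = ∑ μ^π A^π κ` dominates the clipped surrogate because taking a minimum
can only decrease each term.
-/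

open Finset

noncomputable section

variable {S A : Type*} [Fintype S] [Fintype A]

/-- The t-step state distribution of policy `π` started from `ρ`. -/
def stateDist (P : S → A → S → ℝ) (π : S → A → ℝ) (ρ : S → ℝ) : ℕ → S → ℝ
  | 0 => ρ
  | t + 1 => fun s' => ∑ s, ∑ a, stateDist P π ρ t s * π s a * P s a s'

/-- The discounted state visitation distribution `d^π_ρ`. -/
def dvisit (P : S → A → S → ℝ) (π : S → A → ℝ) (ρ : S → ℝ) (γ : ℝ) (s : S) : ℝ :=
  (1 - γ) * ∑' t : ℕ, γ ^ t * stateDist P π ρ t s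

/-- Total variation distance between real-valued functions on a finite set. -/
def dTV {X : Type*} [Fintype X] (p q : X → ℝ) : ℝ := ∑ x, |p x - q x|

/-- The clip function `clip(x, l, u) = max(l, min(x, u))`. -/
def clip (x l u : ℝ) : ℝ := max l (min x u)

def nextValue (P : S → A → S → ℝ) (π : S → A → ℝ) (f : S → ℝ) (s : S) : ℝ :=
  ∑ a, π s a * ∑ s', P s a s' * f s'

lemma summable_geometric_mul_of_abs_le {γ B : ℝ} (hγ0 : 0 ≤ γ) (hγ1 : γ < 1) {c : ℕ → ℝ}
    (hc : ∀ t, |c t| ≤ B) : Summable fun t => γ ^ t * c t :=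
  Summable.of_norm_bounded ((summable_geometric_of_lt_one hγ0 hγ1).mul_right B) fun t => by
    rw [Real.norm_eq_abs, abs_mul, abs_of_nonneg (pow_nonneg hγ0 t)]
    exact mul_le_mul_of_nonneg_left (hc t) (pow_nonneg hγ0 t)

lemma hasSum_geometric_mul_sub_of_abs_le {γ B : ℝ} (hγ0 : 0 ≤ γ) (hγ1 : γ < 1) {c : ℕ → ℝ}
    (hc : ∀ t, |c t| ≤ B) : HasSum (fun t => γ ^ t * (c t - γ * c (t + 1))) (c 0) := by
  have hF1 : Summable fun t => γ ^ (t + 1) * c (t + 1) :=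
    (summable_nat_add_iff (f := fun t => γ ^ t * c t) 1).mpr
      (summable_geometric_mul_of_abs_le hγ0 hγ1 hc)
  have h := (HasSum.zero_add (f := fun t => γ ^ t * c t) hF1.hasSum).sub hF1.hasSum
  simp only [pow_zero, one_mul, add_sub_cancel_right] at h
  refine h.congr_fun fun t => ?_
  ring

section StateDist

variable {P : S → A → S → ℝ} {π : S → A → ℝ} {ρ : S → ℝ}

lemma stateDist_nonneg (hP : ∀ s a s', 0 ≤ P s a s') (hπ : ∀ s a, 0 ≤ π s a)
    (hρ : ∀ s, 0 ≤ ρ s) (t : ℕ) (s : S) : 0 ≤ stateDist P π ρ t s := by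
  induction t generalizing s with
  | zero => exact hρ s
  | succ t ih =>
    show 0 ≤ ∑ s₀, ∑ a, stateDist P π ρ t s₀ * π s₀ a * P s₀ a s
    exact sum_nonneg fun _ _ => sum_nonneg fun a _ =>
      mul_nonneg (mul_nonneg (ih _) (hπ _ a)) (hP _ a s)

lemma sum_stateDist_succ_mul (f : S → ℝ) (t : ℕ) :
    ∑ s, stateDist P π ρ (t + 1) s * f s = ∑ s, stateDist P π ρ t s * nextValue P π f s := by
  simp only [stateDist, nextValue, sum_mul, mul_sum]
  rw [sum_comm]
  refine sum_congr rfl fun s _ => ?_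
  rw [sum_comm]
  simp only [mul_assoc]

lemma nextValue_const (hP : ∀ s a, ∑ s', P s a s' = 1) (hπ : ∀ s, ∑ a, π s a = 1) (x : ℝ)
    (s : S) : nextValue P π (fun _ => x) s = x := by
  simp [nextValue, ← sum_mul, hP, hπ]

lemma sum_stateDist (hP : ∀ s a, ∑ s', P s a s' = 1) (hπ : ∀ s, ∑ a, π s a = 1) (t : ℕ) :
    ∑ s, stateDist P π ρ t s = ∑ s, ρ s := by
  induction t with
  | zero => rfl
  | succ t ih =>
    simpa [nextValue_const hP hπ, ih] using
      sum_stateDist_succ_mul (P := P) (π := π) (ρ := ρ) (fun _ => 1) t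

lemma stateDist_le_sum (hP0 : ∀ s a s', 0 ≤ P s a s') (hP1 : ∀ s a, ∑ s', P s a s' = 1)
    (hπ0 : ∀ s a, 0 ≤ π s a) (hπ1 : ∀ s, ∑ a, π s a = 1) (hρ : ∀ s, 0 ≤ ρ s) (t : ℕ)
    (s : S) : stateDist P π ρ t s ≤ ∑ s, ρ s :=
  sum_stateDist hP1 hπ1 t ▸
    single_le_sum (fun s _ => stateDist_nonneg hP0 hπ0 hρ t s) (mem_univ s)

lemma abs_sum_stateDist_mul_le (hP0 : ∀ s a s', 0 ≤ P s a s')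
    (hP1 : ∀ s a, ∑ s', P s a s' = 1) (hπ0 : ∀ s a, 0 ≤ π s a) (hπ1 : ∀ s, ∑ a, π s a = 1)
    (hρ : ∀ s, 0 ≤ ρ s) (f : S → ℝ) (t : ℕ) :
    |∑ s, stateDist P π ρ t s * f s| ≤ (∑ s, ρ s) * ∑ s, |f s| := by
  rw [mul_sum]
  refine (abs_sum_le_sum_abs _ _).trans (sum_le_sum fun s _ => ?_)
  rw [abs_mul, abs_of_nonneg (stateDist_nonneg hP0 hπ0 hρ t s)]
  exact mul_le_mul_of_nonneg_right (stateDist_le_sum hP0 hP1 hπ0 hπ1 hρ t s) (abs_nonneg _)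

end StateDist

section Visitation

variable {P : S → A → S → ℝ} {π : S → A → ℝ} {ρ : S → ℝ} {γ : ℝ}

lemma dvisit_nonneg (hγ0 : 0 ≤ γ) (hγ1 : γ ≤ 1) (hP : ∀ s a s', 0 ≤ P s a s')
    (hπ : ∀ s a, 0 ≤ π s a) (hρ : ∀ s, 0 ≤ ρ s) (s : S) : 0 ≤ dvisit P π ρ γ s :=
  mul_nonneg (sub_nonneg.mpr hγ1) <| tsum_nonneg fun t =>
    mul_nonneg (pow_nonneg hγ0 t) (stateDist_nonneg hP hπ hρ t s)

lemma sum_dvisit_mul (hγ0 : 0 ≤ γ) (hγ1 : γ < 1) (hP0 : ∀ s a s', 0 ≤ P s a s')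
    (hP1 : ∀ s a, ∑ s', P s a s' = 1) (hπ0 : ∀ s a, 0 ≤ π s a) (hπ1 : ∀ s, ∑ a, π s a = 1)
    (hρ : ∀ s, 0 ≤ ρ s) (h : S → ℝ) :
    ∑ s, dvisit P π ρ γ s * h s = (1 - γ) * ∑' t, γ ^ t * ∑ s, stateDist P π ρ t s * h s := by
  have hsummable (s : S) : Summable fun t => γ ^ t * (stateDist P π ρ t s * h s) := by
    have hbound (t : ℕ) : |stateDist P π ρ t s| ≤ ∑ s, ρ s := by
      rw [abs_of_nonneg (stateDist_nonneg hP0 hπ0 hρ t s)]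
      exact stateDist_le_sum hP0 hP1 hπ0 hπ1 hρ t s
    simpa only [mul_assoc] using
      (summable_geometric_mul_of_abs_le hγ0 hγ1 hbound).mul_right (h s)
  simp only [dvisit, mul_assoc, ← mul_sum, ← tsum_mul_right]
  rw [← Summable.tsum_finsetSum fun s _ => hsummable s]
  simp only [mul_sum]

/-- The Bellman flow equation of the discounted visitation distribution. -/
lemma sum_dvisit_mul_sub_nextValue (hγ0 : 0 ≤ γ) (hγ1 : γ < 1) (hP0 : ∀ s a s', 0 ≤ P s a s')
    (hP1 : ∀ s a, ∑ s', P s a s' = 1) (hπ0 : ∀ s a, 0 ≤ π s a) (hπ1 : ∀ s, ∑ a, π s a = 1)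
    (hρ : ∀ s, 0 ≤ ρ s) (f : S → ℝ) :
    ∑ s, dvisit P π ρ γ s * (f s - γ * nextValue P π f s) = (1 - γ) * ∑ s, ρ s * f s := by
  let c (t : ℕ) : ℝ := ∑ s, stateDist P π ρ t s * f s
  have hstep (t : ℕ) :
      ∑ s, stateDist P π ρ t s * (f s - γ * nextValue P π f s) = c t - γ * c (t + 1) := by
    simp only [c, sum_stateDist_succ_mul, mul_sum, ← sum_sub_distrib]
    exact sum_congr rfl fun s _ => by ring
  rw [sum_dvisit_mul hγ0 hγ1 hP0 hP1 hπ0 hπ1 hρ]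
  simp only [hstep]
  exact congrArg _ (hasSum_geometric_mul_sub_of_abs_le hγ0 hγ1 (c := c)
    (abs_sum_stateDist_mul_le hP0 hP1 hπ0 hπ1 hρ f)).tsum_eq

theorem performance_difference (hγ0 : 0 ≤ γ) (hγ1 : γ < 1) (hP0 : ∀ s a s', 0 ≤ P s a s')
    (hP1 : ∀ s a, ∑ s', P s a s' = 1) (hπ0 : ∀ s a, 0 ≤ π s a) (hπ1 : ∀ s, ∑ a, π s a = 1)
    (hρ : ∀ s, 0 ≤ ρ s) {r : S → A → ℝ} {V' : S → ℝ}
    (hV' : ∀ s, V' s = ∑ a, π s a * (r s a + γ * ∑ s', P s a s' * V' s')) (V : S → ℝ) :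
    (1 - γ) * ∑ s, ρ s * V' s - (1 - γ) * ∑ s, ρ s * V s =
      ∑ s, dvisit P π ρ γ s * ∑ a, π s a * ((r s a + γ * ∑ s', P s a s' * V s') - V s) := by
  have hadv (s : S) : ∑ a, π s a * ((r s a + γ * ∑ s', P s a s' * V s') - V s) =
      (V' s - V s) - γ * nextValue P π (fun s => V' s - V s) s := by
    rw [hV' s]
    simp only [nextValue, mul_sub, mul_add, sum_sub_distrib, sum_add_distrib, ← sum_mul, hπ1,
      one_mul, mul_sum, mul_left_comm (π s _) γ]
    ring
  simp only [hadv]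
  rw [sum_dvisit_mul_sub_nextValue hγ0 hγ1 hP0 hP1 hπ0 hπ1 hρ, mul_sum, mul_sum, mul_sum,
    ← sum_sub_distrib]
  simp only [mul_sub]

end Visitation

lemma mul_min_mul_div_le {p q x y : ℝ} (hp : 0 < p) : p * min (x * (q / p)) y ≤ q * x :=
  calc p * min (x * (q / p)) y ≤ p * (x * (q / p)) :=
        mul_le_mul_of_nonneg_left (min_le_left _ _) hp.le
    _ = q * x := by field_simp

lemma sum_mul_min_ratio_le {d : S → ℝ} (hd : ∀ s, 0 ≤ d s) {π π' : S → A → ℝ}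
    (hπ : ∀ s a, 0 < π s a) (adv y : S → A → ℝ) :
    ∑ s, ∑ a, (d s * π s a) * min (adv s a * (π' s a / π s a)) (y s a) ≤
      ∑ s, d s * ∑ a, π' s a * adv s a := by
  refine sum_le_sum fun s _ => ?_
  rw [mul_sum]
  refine sum_le_sum fun a _ => ?_
  rw [mul_assoc]
  exact mul_le_mul_of_nonneg_left (mul_min_mul_div_le (hπ s a)) (hd s)

lemma abs_sum_sub_mul_le_mul_dTV {X : Type*} [Fintype X] {p q g : X → ℝ} {M : ℝ}
    (hg : ∀ x, |g x| ≤ M) : |∑ x, (p x - q x) * g x| ≤ M * dTV p q := by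
  rw [dTV, mul_sum]
  refine (abs_sum_le_sum_abs _ _).trans (sum_le_sum fun x _ => ?_)
  rw [abs_mul, mul_comm M]
  exact mul_le_mul_of_nonneg_left (hg x) (abs_nonneg _)

theorem clipped_surrogate_lower_bound_general
    [Nonempty S]
    (P : S → A → S → ℝ) (r : S → A → ℝ) (γ : ℝ) (ρ : S → ℝ)
    (hγ0 : 0 ≤ γ) (hγ1 : γ < 1)
    (hP0 : ∀ s a s', 0 ≤ P s a s') (hP1 : ∀ s a, ∑ s', P s a s' = 1)
    (hρ0 : ∀ s, 0 ≤ ρ s)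
    (π π' : S → A → ℝ)
    (hπ0 : ∀ s a, 0 < π s a)
    (hπ'0 : ∀ s a, 0 ≤ π' s a) (hπ'1 : ∀ s, ∑ a, π' s a = 1)
    (ε : ℝ)
    (V V' : S → ℝ)
    (hV' : ∀ s, V' s = ∑ a, π' s a * (r s a + γ * ∑ s', P s a s' * V' s')) :
    (1 - γ) * ∑ s, ρ s * V' s
      ≥ ((1 - γ) * ∑ s, ρ s * V s
          + ∑ s, ∑ a, (dvisit P π ρ γ s * π s a) *
              min (((r s a + γ * ∑ s', P s a s' * V s') - V s) * (π' s a / π s a))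
                  (((r s a + γ * ∑ s', P s a s' * V s') - V s)
                      * clip (π' s a / π s a) (1 - ε) (1 + ε)))
        - (Finset.univ.sup' Finset.univ_nonempty
              (fun s => |∑ a, π' s a * ((r s a + γ * ∑ s', P s a s' * V s') - V s)|))
          * dTV (dvisit P π' ρ γ) (dvisit P π ρ γ) := by
  set adv : S → A → ℝ := fun s a => (r s a + γ * ∑ s', P s a s' * V s') - V s
  set g : S → ℝ := fun s => ∑ a, π' s a * adv s a
  have hperf := performance_difference hγ0 hγ1 hP0 hP1 hπ'0 hπ'1 hρ0 hV' V
  have hsurrogate := sum_mul_min_ratio_le (π' := π')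
    (dvisit_nonneg hγ0 hγ1.le hP0 (fun s a => (hπ0 s a).le) hρ0) hπ0 adv
    (fun s a => adv s a * clip (π' s a / π s a) (1 - ε) (1 + ε))
  have hshift := neg_le_of_abs_le <| abs_sum_sub_mul_le_mul_dTV
    (p := dvisit P π' ρ γ) (q := dvisit P π ρ γ) (M := univ.sup' univ_nonempty fun s => |g s|)
    fun s => le_sup' (fun s => |g s|) (mem_univ s)
  have hsplit : ∑ s, dvisit P π' ρ γ s * g s =
      ∑ s, dvisit P π ρ γ s * g s + ∑ s, (dvisit P π' ρ γ s - dvisit P π ρ γ s) * g s := by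
    rw [← sum_add_distrib]
    exact sum_congr rfl fun s _ => by ring
  linarith

/-- `J(π') ≥ L^clip_π(π') − ε^π · D_TV(d^{π'}_ρ ‖ d^π_ρ)`. -/
theorem clipped_surrogate_lower_bound
    [Nonempty S] [Nonempty A]
    (P : S → A → S → ℝ) (r : S → A → ℝ) (γ : ℝ) (ρ : S → ℝ)
    (hγ0 : 0 ≤ γ) (hγ1 : γ < 1)
    (hP0 : ∀ s a s', 0 ≤ P s a s') (hP1 : ∀ s a, ∑ s', P s a s' = 1)
    (hρ0 : ∀ s, 0 ≤ ρ s) (hρ1 : ∑ s, ρ s = 1)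
    (π π' : S → A → ℝ)
    (hπ0 : ∀ s a, 0 < π s a) (hπ1 : ∀ s, ∑ a, π s a = 1)
    (hπ'0 : ∀ s a, 0 ≤ π' s a) (hπ'1 : ∀ s, ∑ a, π' s a = 1)
    (ε : ℝ) (hε0 : 0 < ε) (hε1 : ε < 1)
    (V V' : S → ℝ)
    (hV : ∀ s, V s = ∑ a, π s a * (r s a + γ * ∑ s', P s a s' * V s'))
    (hV' : ∀ s, V' s = ∑ a, π' s a * (r s a + γ * ∑ s', P s a s' * V' s')) :
    (1 - γ) * ∑ s, ρ s * V' s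
      ≥ ((1 - γ) * ∑ s, ρ s * V s
          + ∑ s, ∑ a, (dvisit P π ρ γ s * π s a) *
              min (((r s a + γ * ∑ s', P s a s' * V s') - V s) * (π' s a / π s a))
                  (((r s a + γ * ∑ s', P s a s' * V s') - V s)
                      * clip (π' s a / π s a) (1 - ε) (1 + ε)))
        - (Finset.univ.sup' Finset.univ_nonempty
              (fun s => |∑ a, π' s a * ((r s a + γ * ∑ s', P s a s' * V s') - V s)|))
          * dTV (dvisit P π' ρ γ) (dvisit P π ρ γ) :=
  clipped_surrogate_lower_bound_general P r γ ρ hγ0 hγ1 hP0 hP1 hρ0 π π' hπ0 hπ'0 hπ'1 ε V V' hV'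
end
end

section
/- Change-of-variables identity for the off-policy divergence objective: for all policies π and π' of a finite discounted MDP and every function h : ℝ → ℝ, the set { ∑_{s,a} μ^{π'}_ρ(s,a) f(s,a) − ∑_{s,a} μ^π_ρ(s,a) h(f(s,a)) : f : S×A → ℝ } equals the set { (1−γ)·∑_{s∈S} ρ(s) ∑_{a∈A} π'(a|s) g(s,a) − ∑_{s,a} μ^π_ρ(s,a) h( g(s,a) − γ·(P^{π'} g)(s,a) ) : g : S×A → ℝ }; in particular the suprema of the two objectives coincide. -/
open Finset

noncomputable section

variable {S A : Type*} [Fintype S] [Fintype A]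

/-- The operator `P^{π'}` acting on functions `g : S×A → ℝ`. -/
def Pop (P : S → A → S → ℝ) (π' : S → A → ℝ) (g : S → A → ℝ) : S → A → ℝ :=
  fun s a => ∑ s', P s a s' * ∑ a', π' s' a' * g s' a'


/-!
Substituting `f = g - γ P^{π'} g` turns the first objective into the second. The visitation
distribution satisfies the Bellman flow equation `d = (1 - γ) ρ + γ d K`, where `K` is the
state-to-state transition matrix of `π'`. Averaging over `π'` intertwines `P^{π'}` with `K`, so
against `μ^{π'}` the linear term becomes `⟨d - γ d K, V⟩ = (1 - γ) ⟨ρ, V⟩` with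
`V s = ∑ a, π'(a|s) g(s,a)`. The substitution is a bijection: `P^{π'}` is nonexpansive in the
sup norm, so `g ↦ g - γ P^{π'} g` is injective for `|γ| < 1`, hence surjective in finite dimension.
-/

open Matrix

section Stochastic

variable {ι κ : Type*} [Fintype ι] [Fintype κ]

theorem abs_sum_mul_le_of_sum_eq_one {w v : ι → ℝ} {M : ℝ} (hw0 : ∀ i, 0 ≤ w i)
    (hw1 : ∑ i, w i = 1) (hv : ∀ i, |v i| ≤ M) : |∑ i, w i * v i| ≤ M :=
  calc |∑ i, w i * v i| ≤ ∑ i, w i * |v i| :=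
        (abs_sum_le_sum_abs _ _).trans_eq <| sum_congr rfl fun i _ => by
          rw [abs_mul, abs_of_nonneg (hw0 i)]
    _ ≤ ∑ i, w i * M := sum_le_sum fun i _ => mul_le_mul_of_nonneg_left (hv i) (hw0 i)
    _ = M := by rw [← sum_mul, hw1, one_mul]

theorem sum_abs_vecMul_le {K : Matrix ι κ ℝ} (hK0 : ∀ i j, 0 ≤ K i j)
    (hK1 : ∀ i, ∑ j, K i j = 1) (v : ι → ℝ) : ∑ j, |(v ᵥ* K) j| ≤ ∑ i, |v i| :=
  calc ∑ j, |(v ᵥ* K) j| ≤ ∑ j, ∑ i, |v i| * K i j :=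
        sum_le_sum fun j _ => (abs_sum_le_sum_abs _ _).trans_eq <| sum_congr rfl fun i _ => by
          rw [abs_mul, abs_of_nonneg (hK0 i j)]
    _ = ∑ i, |v i| := by
        rw [sum_comm]
        simp only [← mul_sum, hK1, mul_one]

end Stochastic

theorem range_eq_and_sSup_range_eq_of_surjective {X Y α : Type*} [SupSet α] {F : X → α}
    {G : Y → α} {T : Y → X} (hT : Function.Surjective T) (hFG : ∀ y, F (T y) = G y) :
    Set.range F = Set.range G ∧ sSup (Set.range F) = sSup (Set.range G) := by
  have hrange : Set.range F = Set.range G := by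
    rw [← hT.range_comp F]
    exact congrArg Set.range (funext hFG)
  exact ⟨hrange, congrArg sSup hrange⟩

def stateKernel (P : S → A → S → ℝ) (π : S → A → ℝ) : Matrix S S ℝ :=
  fun s s' => ∑ a, π s a * P s a s'

def policyAvg (π : S → A → ℝ) (g : S → A → ℝ) : S → ℝ :=
  fun s => ∑ a, π s a * g s a

section MDP

variable {P : S → A → S → ℝ} {π : S → A → ℝ} {ρ : S → ℝ} {γ : ℝ}

theorem sum_stateKernel (hP1 : ∀ s a, ∑ s', P s a s' = 1) (hπ1 : ∀ s, ∑ a, π s a = 1)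
    (s : S) : ∑ s', stateKernel P π s s' = 1 := by
  simp only [stateKernel]
  rw [sum_comm]
  simp only [← mul_sum, hP1, mul_one, hπ1]

theorem stateDist_succ (t : ℕ) :
    stateDist P π ρ (t + 1) = stateDist P π ρ t ᵥ* stateKernel P π := by
  ext s'
  simp only [stateDist, vecMul, dotProduct, stateKernel, mul_sum, mul_assoc]

theorem sum_abs_stateDist_le (hP0 : ∀ s a s', 0 ≤ P s a s') (hP1 : ∀ s a, ∑ s', P s a s' = 1)
    (hπ0 : ∀ s a, 0 ≤ π s a) (hπ1 : ∀ s, ∑ a, π s a = 1) (t : ℕ) :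
    ∑ s, |stateDist P π ρ t s| ≤ ∑ s, |ρ s| := by
  induction t with
  | zero => rfl
  | succ t ih =>
    rw [stateDist_succ]
    have hK0 s s' : 0 ≤ stateKernel P π s s' :=
      sum_nonneg fun a _ => mul_nonneg (hπ0 s a) (hP0 s a s')
    exact (sum_abs_vecMul_le hK0 (sum_stateKernel hP1 hπ1) _).trans ih

theorem summable_geometric_mul_stateDist (hγ : |γ| < 1) (hP0 : ∀ s a s', 0 ≤ P s a s')
    (hP1 : ∀ s a, ∑ s', P s a s' = 1) (hπ0 : ∀ s a, 0 ≤ π s a) (hπ1 : ∀ s, ∑ a, π s a = 1)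
    (s : S) : Summable fun t => γ ^ t * stateDist P π ρ t s := by
  refine .of_norm_bounded ((summable_geometric_of_lt_one (abs_nonneg γ) hγ).mul_right
    (∑ s, |ρ s|)) fun t => ?_
  rw [Real.norm_eq_abs, abs_mul, abs_pow]
  gcongr
  exact (single_le_sum (fun s _ => abs_nonneg (stateDist P π ρ t s)) (mem_univ s)).trans
    (sum_abs_stateDist_le hP0 hP1 hπ0 hπ1 t)

theorem dvisit_eq_add_smul_vecMul (hγ : |γ| < 1) (hP0 : ∀ s a s', 0 ≤ P s a s')
    (hP1 : ∀ s a, ∑ s', P s a s' = 1) (hπ0 : ∀ s a, 0 ≤ π s a) (hπ1 : ∀ s, ∑ a, π s a = 1) :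
    dvisit P π ρ γ = (1 - γ) • ρ + γ • (dvisit P π ρ γ ᵥ* stateKernel P π) := by
  obtain ⟨D, hD⟩ : ∃ D : S → ℝ, ∀ s, HasSum (fun t => γ ^ t * stateDist P π ρ t s) (D s) :=
    ⟨_, fun s => (summable_geometric_mul_stateDist hγ hP0 hP1 hπ0 hπ1 s).hasSum⟩
  have hD_fixed : D = ρ + γ • (D ᵥ* stateKernel P π) := by
    ext s'
    have hshift : HasSum (fun t => γ ^ (t + 1) * stateDist P π ρ (t + 1) s')
        (γ * ∑ s, D s * stateKernel P π s s') := by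
      have hterm : (fun t => γ ^ (t + 1) * stateDist P π ρ (t + 1) s')
          = fun t => γ * ∑ s, γ ^ t * stateDist P π ρ t s * stateKernel P π s s' := by
        funext t
        simp only [stateDist_succ, vecMul, dotProduct, mul_sum, pow_succ]
        ring_nf
      rw [hterm]
      exact (hasSum_sum fun s _ => (hD s).mul_right (stateKernel P π s s')).mul_left γ
    simpa [stateDist, vecMul, dotProduct] using (hD s').unique
      (HasSum.zero_add (f := fun t => γ ^ t * stateDist P π ρ t s') hshift)
  have hdvisit : dvisit P π ρ γ = (1 - γ) • D := funext fun s => by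
    simp [dvisit, (hD s).tsum_eq]
  rw [hdvisit, smul_vecMul, smul_comm γ (1 - γ), ← smul_add, ← hD_fixed]

theorem policyAvg_Pop (g : S → A → ℝ) :
    policyAvg π (Pop P π g) = stateKernel P π *ᵥ policyAvg π g := by
  ext s
  simp only [policyAvg, Pop, stateKernel, mulVec, dotProduct, mul_sum, sum_mul]
  rw [sum_comm]
  refine sum_congr rfl fun s' _ => ?_
  rw [sum_comm]
  exact sum_congr rfl fun a' _ => sum_congr rfl fun a _ => by ring

theorem sum_dvisit_mul_eq_dotProduct (x : S → A → ℝ) :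
    ∑ s, ∑ a, (dvisit P π ρ γ s * π s a) * x s a = dvisit P π ρ γ ⬝ᵥ policyAvg π x := by
  simp only [dotProduct, policyAvg, mul_sum, mul_assoc]

theorem sum_dvisit_mul_sub_smul_Pop (hγ : |γ| < 1) (hP0 : ∀ s a s', 0 ≤ P s a s')
    (hP1 : ∀ s a, ∑ s', P s a s' = 1) (hπ0 : ∀ s a, 0 ≤ π s a) (hπ1 : ∀ s, ∑ a, π s a = 1)
    (g : S → A → ℝ) :
    ∑ s, ∑ a, (dvisit P π ρ γ s * π s a) * (g s a - γ * Pop P π g s a)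
      = (1 - γ) * ∑ s, ρ s * ∑ a, π s a * g s a := by
  set d := dvisit P π ρ γ
  have hflow : d - γ • (d ᵥ* stateKernel P π) = (1 - γ) • ρ :=
    sub_eq_iff_eq_add.mpr (dvisit_eq_add_smul_vecMul hγ hP0 hP1 hπ0 hπ1)
  have hv : policyAvg π (fun s a => g s a - γ * Pop P π g s a)
      = policyAvg π g - γ • (stateKernel P π *ᵥ policyAvg π g) := by
    rw [← policyAvg_Pop]
    ext s
    simp only [policyAvg, Pi.sub_apply, Pi.smul_apply, smul_eq_mul, mul_sum, ← sum_sub_distrib]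
    exact sum_congr rfl fun a _ => by ring
  calc ∑ s, ∑ a, (d s * π s a) * (g s a - γ * Pop P π g s a)
      = (d - γ • (d ᵥ* stateKernel P π)) ⬝ᵥ policyAvg π g := by
        rw [sum_dvisit_mul_eq_dotProduct, hv, dotProduct_sub, dotProduct_smul, dotProduct_mulVec,
          sub_dotProduct, smul_dotProduct]
    _ = (1 - γ) * ∑ s, ρ s * ∑ a, π s a * g s a := by
        rw [hflow, smul_dotProduct, smul_eq_mul]
        rfl

theorem norm_Pop_le (hP0 : ∀ s a s', 0 ≤ P s a s') (hP1 : ∀ s a, ∑ s', P s a s' = 1)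
    (hπ0 : ∀ s a, 0 ≤ π s a) (hπ1 : ∀ s, ∑ a, π s a = 1) (g : S → A → ℝ) :
    ‖Pop P π g‖ ≤ ‖g‖ := by
  have hg s a : |g s a| ≤ ‖g‖ := (norm_le_pi_norm (g s) a).trans (norm_le_pi_norm g s)
  refine (pi_norm_le_iff_of_nonneg (norm_nonneg g)).mpr fun s =>
    (pi_norm_le_iff_of_nonneg (norm_nonneg g)).mpr fun a => ?_
  exact abs_sum_mul_le_of_sum_eq_one (hP0 s a) (hP1 s a) fun s' =>
    abs_sum_mul_le_of_sum_eq_one (hπ0 s') (hπ1 s') (hg s')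

end MDP

def bellmanResidual (P : S → A → S → ℝ) (π : S → A → ℝ) (γ : ℝ) :
    (S → A → ℝ) →ₗ[ℝ] (S → A → ℝ) where
  toFun g s a := g s a - γ * Pop P π g s a
  map_add' g g' := by
    ext s a
    simp only [Pop, Pi.add_apply, mul_add, sum_add_distrib]
    ring
  map_smul' c g := by
    ext s a
    simp only [Pop, Pi.smul_apply, smul_eq_mul, RingHom.id_apply, mul_sum, mul_sub]
    congr 1
    exact sum_congr rfl fun _ _ => sum_congr rfl fun _ _ => by ring

section Residual

variable {P : S → A → S → ℝ} {π : S → A → ℝ} {γ : ℝ}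

theorem bellmanResidual_apply (g : S → A → ℝ) (s : S) (a : A) :
    bellmanResidual P π γ g s a = g s a - γ * Pop P π g s a := rfl

theorem bellmanResidual_injective (hγ : |γ| < 1) (hP0 : ∀ s a s', 0 ≤ P s a s')
    (hP1 : ∀ s a, ∑ s', P s a s' = 1) (hπ0 : ∀ s a, 0 ≤ π s a) (hπ1 : ∀ s, ∑ a, π s a = 1) :
    Function.Injective (bellmanResidual P π γ) := by
  refine (injective_iff_map_eq_zero _).mpr fun g hg => ?_
  have hfixed : g = γ • Pop P π g := by
    ext s a
    simpa [bellmanResidual_apply, sub_eq_zero] using congr_fun (congr_fun hg s) a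
  have hle : ‖g‖ ≤ |γ| * ‖g‖ :=
    calc ‖g‖ = ‖γ • Pop P π g‖ := congrArg norm hfixed
      _ = |γ| * ‖Pop P π g‖ := by rw [norm_smul, Real.norm_eq_abs]
      _ ≤ |γ| * ‖g‖ := by gcongr; exact norm_Pop_le hP0 hP1 hπ0 hπ1 g
  exact norm_eq_zero.mp (by nlinarith [norm_nonneg g])

theorem bellmanResidual_surjective (hγ : |γ| < 1) (hP0 : ∀ s a s', 0 ≤ P s a s')
    (hP1 : ∀ s a, ∑ s', P s a s' = 1) (hπ0 : ∀ s a, 0 ≤ π s a) (hπ1 : ∀ s, ∑ a, π s a = 1) :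
    Function.Surjective (bellmanResidual P π γ) :=
  LinearMap.injective_iff_surjective.mp (bellmanResidual_injective hγ hP0 hP1 hπ0 hπ1)

end Residual

theorem dualdice_change_of_variables_general
    (P : S → A → S → ℝ) (γ : ℝ) (ρ : S → ℝ)
    (hγ0 : 0 ≤ γ) (hγ1 : γ < 1)
    (hP0 : ∀ s a s', 0 ≤ P s a s') (hP1 : ∀ s a, ∑ s', P s a s' = 1)
    (π π' : S → A → ℝ)
    (hπ'0 : ∀ s a, 0 ≤ π' s a) (hπ'1 : ∀ s, ∑ a, π' s a = 1)
    (h : ℝ → ℝ) :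
    (Set.range (fun f : S → A → ℝ =>
        (∑ s, ∑ a, (dvisit P π' ρ γ s * π' s a) * f s a)
          - ∑ s, ∑ a, (dvisit P π ρ γ s * π s a) * h (f s a))
      = Set.range (fun g : S → A → ℝ =>
        ((1 - γ) * ∑ s, ρ s * ∑ a, π' s a * g s a)
          - ∑ s, ∑ a, (dvisit P π ρ γ s * π s a) * h (g s a - γ * Pop P π' g s a)))
    ∧ sSup (Set.range (fun f : S → A → ℝ =>
        (∑ s, ∑ a, (dvisit P π' ρ γ s * π' s a) * f s a)
          - ∑ s, ∑ a, (dvisit P π ρ γ s * π s a) * h (f s a)))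
      = sSup (Set.range (fun g : S → A → ℝ =>
        ((1 - γ) * ∑ s, ρ s * ∑ a, π' s a * g s a)
          - ∑ s, ∑ a, (dvisit P π ρ γ s * π s a) * h (g s a - γ * Pop P π' g s a))) := by
  have hγ : |γ| < 1 := abs_lt.mpr ⟨by linarith, hγ1⟩
  refine range_eq_and_sSup_range_eq_of_surjective
    (bellmanResidual_surjective hγ hP0 hP1 hπ'0 hπ'1) fun g => ?_
  simp only [bellmanResidual_apply, sum_dvisit_mul_sub_smul_Pop hγ hP0 hP1 hπ'0 hπ'1]

/-- Change-of-variables identity for the off-policy divergence objective: the ranges of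
the two objectives (over `f` and over `g`) coincide, and in particular so do
their suprema. -/
theorem dualdice_change_of_variables
    [Nonempty S] [Nonempty A]
    (P : S → A → S → ℝ) (γ : ℝ) (ρ : S → ℝ)
    (hγ0 : 0 ≤ γ) (hγ1 : γ < 1)
    (hP0 : ∀ s a s', 0 ≤ P s a s') (hP1 : ∀ s a, ∑ s', P s a s' = 1)
    (hρ0 : ∀ s, 0 ≤ ρ s) (hρ1 : ∑ s, ρ s = 1)
    (π π' : S → A → ℝ)
    (hπ0 : ∀ s a, 0 ≤ π s a) (hπ1 : ∀ s, ∑ a, π s a = 1)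
    (hπ'0 : ∀ s a, 0 ≤ π' s a) (hπ'1 : ∀ s, ∑ a, π' s a = 1)
    (h : ℝ → ℝ) :
    (Set.range (fun f : S → A → ℝ =>
        (∑ s, ∑ a, (dvisit P π' ρ γ s * π' s a) * f s a)
          - ∑ s, ∑ a, (dvisit P π ρ γ s * π s a) * h (f s a))
      = Set.range (fun g : S → A → ℝ =>
        ((1 - γ) * ∑ s, ρ s * ∑ a, π' s a * g s a)
          - ∑ s, ∑ a, (dvisit P π ρ γ s * π s a) * h (g s a - γ * Pop P π' g s a)))
    ∧ sSup (Set.range (fun f : S → A → ℝ =>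
        (∑ s, ∑ a, (dvisit P π' ρ γ s * π' s a) * f s a)
          - ∑ s, ∑ a, (dvisit P π ρ γ s * π s a) * h (f s a)))
      = sSup (Set.range (fun g : S → A → ℝ =>
        ((1 - γ) * ∑ s, ρ s * ∑ a, π' s a * g s a)
          - ∑ s, ∑ a, (dvisit P π ρ γ s * π s a) * h (g s a - γ * Pop P π' g s a))) :=
  dualdice_change_of_variables_general P γ ρ hγ0 hγ1 hP0 hP1 π π' hπ'0 hπ'1 h
end
end
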